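/- arXiv:0812.0111 — 4 statements merged into one kernel-verified Lean document; each statement's English description precedes it below -/
import Mathlib

section
/- For a prime p, the binomial coefficient C(m, n) is not divisible by p if and only if every base-p digit of n is less than or equal to the corresponding base-p digit of m. -/
/-!
By Lucas's theorem, `C(m, n) ≡ ∏ᵢ C(mᵢ, nᵢ) (mod p)` over the base-`p` digits, so `p` divides
`C(m, n)` iff it divides some `C(mᵢ, nᵢ)`. For a digit `a < p`, `C(a, b)` divides `a!`, which is
prime to `p`, unless `b > a`, in which case `C(a, b) = 0`.
-/

open Nat Finset

theorem Nat.Prime.dvd_choose_iff_lt {p a b : ℕ} (hp : p.Prime) (ha : a < p) :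
    p ∣ a.choose b ↔ a < b := by
  refine ⟨fun hdvd => ?_, fun hab => by simp [choose_eq_zero_of_lt hab]⟩
  by_contra! hba
  have : p ∣ a ! := (hdvd.mul_right _).mul_right _ |>.trans
    (choose_mul_factorial_mul_factorial hba).dvd
  exact absurd (hp.dvd_factorial.mp this) (by omega)

theorem Nat.Prime.dvd_choose_iff_exists_digit_lt {p : ℕ} (hp : p.Prime) (m n : ℕ) :
    p ∣ m.choose n ↔ ∃ i, m / p ^ i % p < n / p ^ i % p := by
  have : Fact p.Prime := ⟨hp⟩
  have hmn : m + n < p ^ (m + n) := Nat.lt_pow_self hp.one_lt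
  rw [(Choose.choose_modEq_prod_range_choose_nat (a := m + n) (by omega) (by omega)).dvd_iff
    dvd_rfl, hp.prime.dvd_finsetProd_iff]
  simp only [mem_range, hp.dvd_choose_iff_lt (mod_lt _ hp.pos)]
  refine ⟨fun ⟨i, _, hi⟩ => ⟨i, hi⟩, fun ⟨i, hi⟩ => ⟨i, ?_, hi⟩⟩
  by_contra! hle
  have : n / p ^ i = 0 := div_eq_of_lt <| by
    calc n < p ^ (m + n) := by omega
      _ ≤ p ^ i := Nat.pow_le_pow_right hp.pos hle
  simp [this] at hi

theorem lucas_criterion_general (p : ℕ) (hp : p.Prime) (m n : ℕ) :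
    ¬ p ∣ m.choose n ↔ ∀ i, n / p ^ i % p ≤ m / p ^ i % p := by
  simp only [hp.dvd_choose_iff_exists_digit_lt, not_exists, not_lt]

/-- Lucas criterion: `p ∤ C(m,n)` iff every base-`p` digit of `n` is at most
the corresponding digit of `m`. -/
theorem lucas_criterion (p : ℕ) (hp : p.Prime) (m n : ℕ) (hnm : n ≤ m) :
    ¬ p ∣ m.choose n ↔ ∀ i, n / p ^ i % p ≤ m / p ^ i % p :=
  lucas_criterion_general p hp m n
end

section
/- The number of entries in row n of Pascal's triangle that are not divisible by a prime p equals the product over the base-p digits d_i of n of (d_i + 1). -/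
/-!
Lucas's theorem reduces `C(n, k)` modulo `p` to `C(n % p, k % p) * C(n / p, k / p)`, and a
binomial coefficient `C(b, a)` with `b < p` is prime to `p` exactly when `a ≤ b`. So `C(n, k)` is
prime to `p` iff `k % p ≤ n % p` and `C(n / p, k / p)` is prime to `p`. Splitting `k` into its
last digit and the rest gives `count n = (n % p + 1) * count (n / p)`, and iterating over the
digits of `n` yields the product.
-/

open Finset

def notDvdChooseCount (p n : ℕ) : ℕ :=
  #{k ∈ range (n + 1) | ¬ p ∣ n.choose k}

theorem Nat.Prime.not_dvd_choose_iff_le_of_lt {p a b : ℕ} (hp : p.Prime) (hb : b < p) :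
    ¬ p ∣ b.choose a ↔ a ≤ b := by
  refine ⟨fun h => ?_, fun hab => (hp.coprime_iff_not_dvd).mp (hp.coprime_choose_of_lt hb hab)⟩
  by_contra! hba
  exact h (by rw [Nat.choose_eq_zero_of_lt hba]; exact dvd_zero p)

theorem Nat.Prime.not_dvd_choose_iff {p n k : ℕ} (hp : p.Prime) :
    ¬ p ∣ n.choose k ↔ k % p ≤ n % p ∧ ¬ p ∣ (n / p).choose (k / p) := by
  have : Fact p.Prime := ⟨hp⟩
  have lucas := Choose.choose_modEq_choose_mod_mul_choose_div_nat (n := n) (k := k) (p := p)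
  rw [← hp.not_dvd_choose_iff_le_of_lt (Nat.mod_lt n hp.pos), ← not_or, ← hp.dvd_mul,
    ← Nat.modEq_zero_iff_dvd, ← Nat.modEq_zero_iff_dvd]
  exact not_congr ⟨lucas.symm.trans, lucas.trans⟩

theorem card_filter_range_mod_le_and_div {p : ℕ} (hp : 0 < p) (n : ℕ) (s : ℕ → Prop)
    [DecidablePred s] :
    #{k ∈ range (n + 1) | k % p ≤ n % p ∧ s (k / p)} =
      (n % p + 1) * #{q ∈ range (n / p + 1) | s q} := by
  rw [← card_range (n % p + 1), ← card_product]
  have split : ∀ {r q : ℕ}, r < p → (r + p * q) / p = q ∧ (r + p * q) % p = r :=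
    fun hr => (Nat.div_mod_unique hp).mpr ⟨rfl, hr⟩
  have hn := Nat.mod_add_div n p
  have hnp := Nat.mod_lt n hp
  refine card_nbij' (fun k => (k % p, k / p)) (fun x => x.1 + p * x.2) ?_ ?_ ?_ ?_
  · intro k hk
    simp only [mem_coe, mem_filter, mem_range, mem_product] at hk ⊢
    exact ⟨by omega, Nat.lt_succ_of_le (Nat.div_le_div_right (by omega)), hk.2.2⟩
  · rintro ⟨r, q⟩ hx
    simp only [mem_coe, mem_filter, mem_range, mem_product] at hx ⊢
    obtain ⟨hqdiv, hrmod⟩ := split (r := r) (q := q) (by omega)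
    have : p * q ≤ p * (n / p) := Nat.mul_le_mul_left p (by omega)
    exact ⟨by omega, by omega, by rw [hqdiv]; exact hx.2.2⟩
  · intro k _
    exact Nat.mod_add_div k p
  · rintro ⟨r, q⟩ hx
    simp only [mem_coe, mem_product, mem_range] at hx
    obtain ⟨hqdiv, hrmod⟩ := split (r := r) (q := q) (by omega)
    simp only [hqdiv, hrmod]

theorem notDvdChooseCount_eq_mul {p : ℕ} (hp : p.Prime) (n : ℕ) :
    notDvdChooseCount p n = (n % p + 1) * notDvdChooseCount p (n / p) := by
  rw [notDvdChooseCount, filter_congr fun k _ => hp.not_dvd_choose_iff]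
  exact card_filter_range_mod_le_and_div hp.pos n fun q => ¬ p ∣ (n / p).choose q

theorem notDvdChooseCount_eq_prod_of_lt_pow {p : ℕ} (hp : p.Prime) {a n : ℕ} (hn : n < p ^ a) :
    notDvdChooseCount p n = ∏ i ∈ range a, (n / p ^ i % p + 1) := by
  induction a generalizing n with
  | zero =>
    obtain rfl : n = 0 := by simpa using hn
    simp [notDvdChooseCount, filter_singleton, Nat.dvd_one, hp.ne_one]
  | succ a ih =>
    have hdiv : n / p < p ^ a := by rwa [Nat.div_lt_iff_lt_mul hp.pos, ← pow_succ]
    rw [notDvdChooseCount_eq_mul hp, ih hdiv, prod_range_succ', pow_zero, Nat.div_one, mul_comm]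
    simp only [Nat.div_div_eq_div_mul, ← pow_succ']

/-- The number of entries in row `n` of Pascal's triangle not divisible by
the prime `p` equals the product of `(d_i + 1)` over the base-`p` digits of `n`. -/
theorem row_count_not_dvd (p : ℕ) (hp : p.Prime) (n : ℕ) :
    ((Finset.range (n + 1)).filter (fun k => ¬ p ∣ n.choose k)).card =
      ∏ i ∈ Finset.range (n + 1), (n / p ^ i % p + 1) := by
  have hn : n < p ^ (n + 1) :=
    (Nat.lt_pow_self hp.one_lt).trans (Nat.pow_lt_pow_right hp.one_lt n.lt_succ_self)
  exact notDvdChooseCount_eq_prod_of_lt_pow hp hn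
end

section
/- For a prime p, the sequence n ↦ C(n, k) mod p (for fixed k ≥ 0) is periodic with period p^m, where p^m is the least power of p exceeding k. -/
lemma choose_mod_periodic_aux (p : ℕ) (hp : p.Prime) :
    ∀ m k n : ℕ, k < p ^ m → (n + p ^ m).choose k ≡ n.choose k [MOD p] := by
  intro m
  induction m with
  | zero =>
    intro k n hk
    have hk0 : k = 0 := by simpa using hk
    subst hk0
    simp [Nat.choose_zero_right, Nat.ModEq.refl]
  | succ m ih =>
    intro k n hk
    have hp0 : 0 < p := hp.pos
    have : Fact p.Prime := ⟨hp⟩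
    have h1 : (n + p ^ (m + 1)).choose k ≡
        ((n + p ^ (m + 1)) % p).choose (k % p) * ((n + p ^ (m + 1)) / p).choose (k / p)
        [MOD p] := Choose.choose_modEq_choose_mod_mul_choose_div_nat
    have h2 : n.choose k ≡ (n % p).choose (k % p) * (n / p).choose (k / p) [MOD p] :=
      Choose.choose_modEq_choose_mod_mul_choose_div_nat
    have hmod : (n + p ^ (m + 1)) % p = n % p := by
      obtain ⟨t, ht⟩ := dvd_pow_self p (Nat.succ_ne_zero m)
      rw [ht, Nat.mul_comm, Nat.add_mul_mod_self_right]
    have hdiv : (n + p ^ (m + 1)) / p = n / p + p ^ m := by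
      rw [pow_succ]
      rw [Nat.add_mul_div_right _ _ hp0]
    have hk' : k / p < p ^ m := by
      rw [Nat.div_lt_iff_lt_mul hp0]
      calc k < p ^ (m + 1) := hk
        _ = p ^ m * p := pow_succ p m
    have h3 : ((n + p ^ (m + 1)) / p).choose (k / p) ≡ (n / p).choose (k / p) [MOD p] := by
      rw [hdiv]; exact ih (k / p) (n / p) hk'
    calc (n + p ^ (m + 1)).choose k
        ≡ ((n + p ^ (m + 1)) % p).choose (k % p) * ((n + p ^ (m + 1)) / p).choose (k / p)
          [MOD p] := h1
      _ ≡ (n % p).choose (k % p) * (n / p).choose (k / p) [MOD p] := by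
          rw [hmod]; exact Nat.ModEq.mul_left _ h3
      _ ≡ n.choose k [MOD p] := h2.symm

/-- For a prime `p` and fixed `k`, the sequence `n ↦ C(n,k) mod p` is periodic with
period `p^m`, where `p^m` is the least power of `p` exceeding `k`. -/
theorem choose_mod_periodic (p : ℕ) (hp : p.Prime) (k m : ℕ)
    (hk : k < p ^ m) (hmin : ∀ j, k < p ^ j → m ≤ j) :
    ∀ n, (n + p ^ m).choose k ≡ n.choose k [MOD p] :=
  fun n => choose_mod_periodic_aux p hp m k n hk
end

section
/- For primes p and positive integers n, the proportion of entries in the first p^n rows of Pascal's triangle not divisible by p tends to 0 as n → ∞ when p ≥ 2; precisely, (p(p+1)/2)^n divided by the total number of entries p^n(p^n+1)/2 tends to 0. -/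
open Filter

/-! Dropping the `+ 1` in the denominator bounds the proportion by `2 ((q + 1) / (2q))^n`, a
geometric sequence whose ratio is `< 1` exactly when `q > 1`. -/

lemma proportion_le_two_mul_geometric {q : ℝ} (hq : 0 < q) (n : ℕ) :
    (q * (q + 1) / 2) ^ n / (q ^ n * (q ^ n + 1) / 2) ≤ 2 * ((q + 1) / (2 * q)) ^ n := by
  have hqn : 0 < q ^ n := pow_pos hq n
  calc (q * (q + 1) / 2) ^ n / (q ^ n * (q ^ n + 1) / 2)
      ≤ (q * (q + 1) / 2) ^ n / (q ^ n * q ^ n / 2) := by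
        gcongr
        linarith
    _ = 2 * ((q + 1) / (2 * q)) ^ n := by
        rw [div_pow, mul_pow, div_pow, mul_pow]
        field_simp

lemma tendsto_proportion_zero {q : ℝ} (hq : 1 < q) :
    Tendsto (fun n : ℕ => (q * (q + 1) / 2) ^ n / (q ^ n * (q ^ n + 1) / 2)) atTop (nhds 0) := by
  have hq0 : 0 < q := by linarith
  have hratio : (q + 1) / (2 * q) < 1 := by
    rw [div_lt_one (by positivity)]
    linarith
  have hgeom : Tendsto (fun n : ℕ => 2 * ((q + 1) / (2 * q)) ^ n) atTop (nhds 0) := by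
    simpa using (tendsto_pow_atTop_nhds_zero_of_lt_one (by positivity) hratio).const_mul 2
  exact squeeze_zero (fun n => by positivity) (proportion_le_two_mul_geometric hq0) hgeom

open Filter in
/-- The proportion of entries in the first `p^n` rows of Pascal's triangle that are
not divisible by the prime `p` tends to `0`: `(p(p+1)/2)^n / (p^n(p^n+1)/2) → 0`. -/
theorem proportion_tendsto_zero (p : ℕ) (hp : p.Prime) :
    Tendsto (fun n : ℕ =>
        (((p : ℝ) * (p + 1) / 2) ^ n) / ((p : ℝ) ^ n * ((p : ℝ) ^ n + 1) / 2))
      atTop (nhds 0) :=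
  tendsto_proportion_zero (by exact_mod_cast hp.one_lt)
end
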